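/- Let p ≠ 2 and let b, c be matrices over Z/p^μ (b of size m×N, c of size N×m) with cb = 0 (mod p). Then there exists a matrix u of the form u = -1/2 + Σ_{j>0} s_j (cb)^j (s_j dyadic rationals interpreted in Z/p^μ, sum finite by nilpotency of cb) satisfying 2u + 1 = u(cb)u - Σ_{j>0}(cb)^j, and this u is invertible. -/

import Mathlib

/-!
With `a = cb` we have `a = p • a'`, so `a ^ μ = 0`. The quadratic `X y² - 2y - 1 - ∑ Xʲ` has a
root modulo `X ^ μ` in `R[X]` with constant term `-1/2`: iterate the contraction
`y ↦ (X y² - 1 - ∑ Xʲ) / 2`, which gains one power of `X` per step. Evaluating this polynomial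
at `a` gives `u`; it is a unit because its constant term is and `a` is nilpotent.
-/

open Polynomial

lemma pow_dvd_iterate_succ_sub_iterate {S : Type*} [CommRing S] {x : S} {f : S → S}
    (hf : ∀ k a b, x ^ k ∣ a - b → x ^ (k + 1) ∣ f a - f b) (y : S) (k : ℕ) :
    x ^ k ∣ f^[k + 1] y - f^[k] y := by
  induction k with
  | zero => simp
  | succ k ih =>
    have h := hf k _ _ ih
    rwa [← Function.iterate_succ_apply' f (k + 1), ← Function.iterate_succ_apply' f k] at h

namespace Polynomial

variable {R S : Type*} [CommRing R]

lemma exists_coeff_zero_eq_and_X_pow_dvd {t : R} (ht : 2 * t = 1) (Q : R[X]) {n : ℕ}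
    (hn : n ≠ 0) :
    ∃ P : R[X], P.coeff 0 = -(t * (1 + Q.coeff 0)) ∧ X ^ n ∣ X * P ^ 2 - 2 * P - 1 - Q := by
  set f : R[X] → R[X] := fun y => C t * (X * y ^ 2 - 1 - Q) with hf
  have hcontract : ∀ k a b, (X : R[X]) ^ k ∣ a - b → X ^ (k + 1) ∣ f a - f b := by
    rintro k a b ⟨r, hr⟩
    exact ⟨C t * (a + b) * r, by linear_combination (C t * X * (a + b)) * hr⟩
  have h2t : (2 : R[X]) * C t = 1 := by rw [← C_ofNat, ← C_mul, ht, C_1]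
  obtain ⟨n, rfl⟩ := Nat.exists_eq_add_one_of_ne_zero hn
  refine ⟨f^[n + 1] 0, ?_, ?_⟩
  · rw [Function.iterate_succ_apply']
    simp only [hf, mul_coeff_zero, coeff_C_zero, coeff_sub, coeff_X_zero, zero_mul, coeff_one_zero,
      zero_sub]
    ring
  · obtain ⟨r, hr⟩ := pow_dvd_iterate_succ_sub_iterate hcontract 0 (n + 1)
    have hstep : f^[n + 1 + 1] 0 = f (f^[n + 1] 0) := Function.iterate_succ_apply' f _ 0
    refine ⟨2 * r, ?_⟩
    linear_combination 2 * hr - 2 * hstep - (X * (f^[n + 1] 0) ^ 2 - 1 - Q) * h2t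

variable [Ring S] [Algebra R S]

lemma aeval_eq_zero_of_X_pow_dvd {a : S} {n : ℕ} (ha : a ^ n = 0) {F : R[X]}
    (hF : X ^ n ∣ F) : aeval a F = 0 := by
  obtain ⟨G, rfl⟩ := hF
  rw [map_mul, map_pow, aeval_X, ha, zero_mul]

lemma aeval_eq_sum_range_of_pow_eq_zero {a : S} {n : ℕ} (ha : a ^ n = 0) (P : R[X]) :
    aeval a P = ∑ i ∈ Finset.range n, P.coeff i • a ^ i := by
  rw [aeval_eq_sum_range' (n := n + P.natDegree + 1) (by omega)]
  refine (Finset.sum_subset (Finset.range_subset_range.2 (by omega)) fun i _ hi => ?_).symm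
  rw [Finset.mem_range, not_lt] at hi
  rw [pow_eq_zero_of_le hi ha, smul_zero]

lemma isUnit_aeval_of_isNilpotent {a : S} (ha : IsNilpotent a) {P : R[X]}
    (hP : IsUnit (P.coeff 0)) : IsUnit (aeval a P) := by
  have hcomm : Commute a (aeval a P.divX) := by
    simpa using (Commute.all X P.divX).map (aeval a)
  rw [← X_mul_divX_add P, map_add, map_mul, aeval_X, aeval_C, add_comm]
  exact (hcomm.isNilpotent_mul_right ha).isUnit_add_left_of_commute (hP.map _)
    (Algebra.commute_algebraMap_right _ _)

end Polynomial

lemma ZMod.exists_eq_smul_of_map_castHom_eq_zero {p n : ℕ} (h : p ∣ n) {ι κ : Type*}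
    {A : Matrix ι κ (ZMod n)} (hA : A.map (ZMod.castHom h (ZMod p)) = 0) :
    ∃ B : Matrix ι κ (ZMod n), A = (p : ZMod n) • B := by
  have hentry : ∀ i j, ∃ y : ZMod n, A i j = p * y := by
    intro i j
    obtain ⟨z, hz⟩ := ZMod.intCast_surjective (A i j)
    have hpz : ZMod.castHom h (ZMod p) (z : ZMod n) = 0 := by
      rw [hz]
      exact congrFun₂ hA i j
    rw [map_intCast, ZMod.intCast_zmod_eq_zero_iff_dvd] at hpz
    obtain ⟨w, rfl⟩ := hpz
    exact ⟨w, by rw [← hz]; push_cast; rfl⟩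
  choose B hB using hentry
  exact ⟨Matrix.of B, Matrix.ext fun i j => hB i j⟩

theorem stmt14 {p : ℕ} (hp : p.Prime) (hp2 : p ≠ 2) {μ : ℕ} (hμ : 1 ≤ μ) {m N : ℕ}
    (b : Matrix (Fin m) (Fin N) (ZMod (p ^ μ))) (c : Matrix (Fin N) (Fin m) (ZMod (p ^ μ)))
    (hcb : (c * b).map (ZMod.castHom (dvd_pow_self p (by omega : μ ≠ 0)) (ZMod p)) = 0) :
    ∃ u : Matrix (Fin N) (Fin N) (ZMod (p ^ μ)),
      (∃ (σ : ℕ → ℤ) (n : ℕ → ℕ),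
        u = -((2 : ZMod (p ^ μ))⁻¹ • (1 : Matrix (Fin N) (Fin N) (ZMod (p ^ μ)))) +
          ∑ j ∈ Finset.Icc 1 μ,
            (((σ j : ZMod (p ^ μ))) * ((2 : ZMod (p ^ μ))⁻¹) ^ (n j)) • (c * b) ^ j) ∧
      (2 : ZMod (p ^ μ)) • u + 1 = u * (c * b) * u - ∑ j ∈ Finset.Icc 1 μ, (c * b) ^ j ∧
      IsUnit u := by
  set A := c * b
  have h2 : IsUnit (2 : ZMod (p ^ μ)) := by
    exact_mod_cast (ZMod.isUnit_iff_coprime 2 _).2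
      (Nat.coprime_two_left.2 ((hp.odd_of_ne_two hp2).pow))
  have h2t : (2 : ZMod (p ^ μ)) * 2⁻¹ = 1 := ZMod.mul_inv_of_unit _ h2
  have hAμ : A ^ μ = 0 := by
    obtain ⟨B, hB⟩ := ZMod.exists_eq_smul_of_map_castHom_eq_zero _ hcb
    rw [hB, _root_.smul_pow, ← Nat.cast_pow, ZMod.natCast_self, zero_smul]
  set Q : (ZMod (p ^ μ))[X] := ∑ j ∈ Finset.Icc 1 μ, X ^ j
  have hQ0 : Q.coeff 0 = 0 := by simp [Q, coeff_X_pow]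
  obtain ⟨P, hP0, hPQ⟩ := exists_coeff_zero_eq_and_X_pow_dvd h2t Q (n := μ) (by omega)
  rw [hQ0, add_zero, mul_one] at hP0
  refine ⟨aeval A P, ?_, ?_, ?_⟩
  · -- every element of `ZMod (p ^ μ)` is an integer, so no powers of `2⁻¹` are needed
    obtain ⟨σ, hσ⟩ := ZMod.intCast_surjective.hasRightInverse
    refine ⟨fun j => σ (P.coeff j), fun _ => 0, ?_⟩
    rw [aeval_eq_sum_range_of_pow_eq_zero (pow_eq_zero_of_le (μ.le_add_right 1) hAμ),
      Finset.range_eq_Ico, Finset.sum_eq_sum_Ico_succ_bot (by omega), zero_add,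
      Finset.Ico_add_one_right_eq_Icc]
    simp [hσ _, hP0]
  · have hcomm : Commute A (aeval A P) := by
      simpa using (Commute.all X P).map (aeval A)
    have hroot := aeval_eq_zero_of_X_pow_dvd hAμ hPQ
    simp only [map_sub, map_mul, map_pow, map_one, map_ofNat, aeval_X, Q, map_sum] at hroot
    rw [sub_sub, sub_sub, sub_eq_zero] at hroot
    rw [hcomm.symm.eq, mul_assoc, ← sq, hroot, two_smul, two_mul]
    abel
  · exact isUnit_aeval_of_isNilpotent ⟨μ, hAμ⟩ (hP0 ▸ (IsUnit.of_mul_eq_one_right _ h2t).neg)
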